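/- Let 1 ≤ k ≤ n with k ≤ (n+1)/2, and let A ∈ ℂ^{n×n}. Suppose O_k(A) is not contained in any plane through the origin. If F is a face of conv(O_k(A)) with dim F = 2 such that (0,0,0) lies in the relative interior of F and F ⊆ {(t,x,y) ∈ ℝ³ : t + ax + by = 0} for some (a,b) ∈ ℝ², then Λ_k(A) = {a + ib}. -/

import Mathlib

/-!
Write `φ(t, x, y) = t + a x + b y` and `O(θ) = (λ_k(θ), -cos θ, -sin θ)`. The face `F ⊆ ker φ` is
two-dimensional and contains `0`, so its affine span is the plane `ker φ`; as `0` lies in its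
relative interior, every point of `conv O_k(A)` on that plane already lies in `F`.

Because `k ≤ (n + 1) / 2`, `λ_k(θ) + λ_k(θ + π) = λ_k(M) - λ_{n+1-k}(M) ≥ 0` for
`M = cos θ · Re A + sin θ · Im A`, i.e. `φ(O(θ)) + φ(O(θ + π)) ≥ 0`. So if `φ(O(θ)) < 0`, the
segment from `O(θ)` to `O(θ + π)` crosses `ker φ` inside `conv O_k(A)`, and the face property puts
`O(θ)` into `F ⊆ ker φ`, a contradiction. Hence `φ ≥ 0` on `O_k(A)`, i.e. `a + ib ∈ Λ_k(A)`.

Conversely, for `z ∈ Λ_k(A)` the functional `ψ(t, x, y) = t + Re z · x + Im z · y` is nonnegative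
on `conv O_k(A) ⊇ F` and vanishes at the relative interior point `0` of `F`, so it vanishes on
`ker φ`; this forces `ψ = φ`, i.e. `z = a + ib`.
-/

open Matrix

noncomputable section

/-- The Hermitian real part `(A + Aᴴ)/2` of a complex matrix. -/
def ReM {n : ℕ} (A : Matrix (Fin n) (Fin n) ℂ) : Matrix (Fin n) (Fin n) ℂ :=
  (2⁻¹ : ℂ) • (A + Aᴴ)

/-- The Hermitian imaginary part `(A - Aᴴ)/(2i)` of a complex matrix. -/
def ImM {n : ℕ} (A : Matrix (Fin n) (Fin n) ℂ) : Matrix (Fin n) (Fin n) ℂ :=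
  ((2 * Complex.I)⁻¹ : ℂ) • (A - Aᴴ)

/-- The `k`-th largest eigenvalue (for `1 ≤ k ≤ n`) of a Hermitian `n × n` matrix
(with junk value `0` for non-Hermitian input): the eigenvalues sorted in increasing
order, evaluated at index `n - k`. -/
def kthEig {n : ℕ} (M : Matrix (Fin n) (Fin n) ℂ) (k : ℕ) : ℝ :=
  if hM : M.IsHermitian then
    if h : n - k < n then (hM.eigenvalues ∘ Tuple.sort hM.eigenvalues) ⟨n - k, h⟩ else 0
  else 0

/-- `λ_k(x,y) = λ_k(x·Re A + y·Im A)`. -/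
def lamXY {n : ℕ} (A : Matrix (Fin n) (Fin n) ℂ) (k : ℕ) (x y : ℝ) : ℝ :=
  kthEig ((x : ℂ) • ReM A + (y : ℂ) • ImM A) k

/-- `λ_k(θ) = λ_k(cos θ · Re A + sin θ · Im A)`. -/
def lamTheta {n : ℕ} (A : Matrix (Fin n) (Fin n) ℂ) (k : ℕ) (θ : ℝ) : ℝ :=
  lamXY A k (Real.cos θ) (Real.sin θ)

/-- The rank-`k` numerical range, via the Li–Sze halfplane description:
`Λ_k(A) = {a + ib : a cos θ + b sin θ ≤ λ_k(θ) for all θ}`. -/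
def NumRange {n : ℕ} (A : Matrix (Fin n) (Fin n) ℂ) (k : ℕ) : Set ℂ :=
  {z : ℂ | ∀ θ : ℝ, z.re * Real.cos θ + z.im * Real.sin θ ≤ lamTheta A k θ}

/-- The curve `O_k(A) = {(λ_k(θ), -cos θ, -sin θ)} ⊂ ℝ³`. -/
def OkSet {n : ℕ} (A : Matrix (Fin n) (Fin n) ℂ) (k : ℕ) : Set (Fin 3 → ℝ) :=
  {v | ∃ θ : ℝ, v = ![lamTheta A k θ, -Real.cos θ, -Real.sin θ]}

/-- Conical hull: all finite nonnegative combinations of elements of `S`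
(including the empty combination `0`). -/
def coneHull {V : Type*} [AddCommMonoid V] [Module ℝ V] (S : Set V) : Set V :=
  {x | ∃ (m : ℕ) (c : Fin m → ℝ) (p : Fin m → V),
    (∀ i, 0 ≤ c i) ∧ (∀ i, p i ∈ S) ∧ x = ∑ i, c i • p i}

/-- Dual cone with respect to the standard inner product on `ι → ℝ`. -/
def dualCone {ι : Type*} [Fintype ι] (C : Set (ι → ℝ)) : Set (ι → ℝ) :=
  {w | ∀ v ∈ C, 0 ≤ ∑ i, w i * v i}

/-- The cone `Ĉ = {(c,a,b) : c ≥ 0 and a cos θ + b sin θ ≤ c λ_k(θ) for all θ}`. -/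
def ChatSet {n : ℕ} (A : Matrix (Fin n) (Fin n) ℂ) (k : ℕ) : Set (Fin 3 → ℝ) :=
  {v | 0 ≤ v 0 ∧ ∀ θ : ℝ, v 1 * Real.cos θ + v 2 * Real.sin θ ≤ v 0 * lamTheta A k θ}

section IntrinsicInterior

open Topology

variable {E : Type*} [NormedAddCommGroup E] [NormedSpace ℝ E] {C F : Set E} {x : E}

theorem exists_pos_smul_add_mem_of_mem_intrinsicInterior (hx : x ∈ intrinsicInterior ℝ F)
    {v : E} (hv : v ∈ (affineSpan ℝ F).direction) : ∃ c : ℝ, 0 < c ∧ c • v + x ∈ F := by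
  obtain ⟨y, hy, rfl⟩ := hx
  let line : ℝ → affineSpan ℝ F := fun t =>
    ⟨t • v + y, AffineSubspace.vadd_mem_of_mem_direction (Submodule.smul_mem _ t hv) y.2⟩
  have hline : Continuous line := by fun_prop
  have hnhds : ∀ᶠ t in 𝓝 (0 : ℝ), line t ∈ interior ((↑) ⁻¹' F : Set (affineSpan ℝ F)) :=
    hline.continuousAt.preimage_mem_nhds (by simpa [line] using isOpen_interior.mem_nhds hy)
  obtain ⟨c, hcF, hc⟩ :=
    ((hnhds.filter_mono nhdsWithin_le_nhds).and (self_mem_nhdsWithin (s := Set.Ioi 0))).exists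
  exact ⟨c, hc, interior_subset (s := ((↑) ⁻¹' F : Set (affineSpan ℝ F))) hcF⟩

theorem IsExtreme.mem_of_mem_affineSpan (hF : IsExtreme ℝ C F) (hx : x ∈ intrinsicInterior ℝ F)
    {y : E} (hy : y ∈ C) (hyF : y ∈ affineSpan ℝ F) : y ∈ F := by
  have hxF : x ∈ F := intrinsicInterior_subset hx
  have hdir : x - y ∈ (affineSpan ℝ F).direction :=
    AffineSubspace.vsub_mem_direction (subset_affineSpan ℝ F hxF) hyF
  obtain ⟨c, hc, hz⟩ := exists_pos_smul_add_mem_of_mem_intrinsicInterior hx hdir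
  -- `x` divides the segment from `y` to `c • (x - y) + x` in the ratio `1 : c`
  have hseg : x ∈ openSegment ℝ y (c • (x - y) + x) := by
    refine ⟨c / (1 + c), 1 / (1 + c), by positivity, by positivity, by field_simp; ring, ?_⟩
    match_scalars <;> field_simp <;> ring
  exact hF.left_mem_of_mem_openSegment hy (hF.subset hz) hxF hseg

theorem IsExtreme.left_mem_of_openSegment_inter_affineSpan (hC : Convex ℝ C)
    (hF : IsExtreme ℝ C F) (hx : x ∈ intrinsicInterior ℝ F) {p q r : E} (hp : p ∈ C) (hq : q ∈ C)
    (hr : r ∈ openSegment ℝ p q) (hrF : r ∈ affineSpan ℝ F) : p ∈ F :=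
  hF.left_mem_of_mem_openSegment hp hq
    (hF.mem_of_mem_affineSpan hx (hC.openSegment_subset hp hq hr) hrF) hr

theorem LinearMap.map_eq_zero_of_nonneg_of_mem_intrinsicInterior {ψ : E →ₗ[ℝ] ℝ}
    (hψ : ∀ f ∈ F, 0 ≤ ψ f) (hx : x ∈ intrinsicInterior ℝ F) (hψx : ψ x = 0) {v : E}
    (hv : v ∈ (affineSpan ℝ F).direction) : ψ v = 0 := by
  obtain ⟨c, hc, hcF⟩ := exists_pos_smul_add_mem_of_mem_intrinsicInterior hx hv
  obtain ⟨d, hd, hdF⟩ := exists_pos_smul_add_mem_of_mem_intrinsicInterior hx (neg_mem hv)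
  have h₁ := hψ _ hcF
  have h₂ := hψ _ hdF
  simp only [map_add, map_smul, map_neg, hψx, smul_eq_mul, add_zero] at h₁ h₂
  nlinarith

end IntrinsicInterior

theorem exists_mem_openSegment_map_eq_zero {E : Type*} [AddCommGroup E] [Module ℝ E]
    {φ : E →ₗ[ℝ] ℝ} {p q : E} (hp : φ p < 0) (hq : 0 < φ q) :
    ∃ r ∈ openSegment ℝ p q, φ r = 0 := by
  have hpq : 0 < φ q - φ p := by linarith
  refine ⟨(φ q / (φ q - φ p)) • p + (-φ p / (φ q - φ p)) • q,
    ⟨_, _, div_pos hq hpq, div_pos (neg_pos.2 hp) hpq, by field_simp; ring, rfl⟩, ?_⟩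
  simp only [map_add, map_smul, smul_eq_mul]
  field_simp
  ring

theorem affineSpan_eq_ker_of_finrank_succ {K E : Type*} [Field K] [AddCommGroup E] [Module K E]
    [FiniteDimensional K E] {φ : E →ₗ[K] K} (hφ : φ ≠ 0) {F : Set E} (hne : F.Nonempty)
    (hF : F ⊆ LinearMap.ker φ)
    (hdim : Module.finrank K (affineSpan K F).direction + 1 = Module.finrank K E) :
    affineSpan K F = (LinearMap.ker φ).toAffineSubspace := by
  have hle : affineSpan K F ≤ (LinearMap.ker φ).toAffineSubspace := affineSpan_le.2 hF
  have hker : LinearMap.ker φ ≠ ⊤ := fun h => hφ (LinearMap.ker_eq_top.1 h)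
  refine AffineSubspace.eq_of_direction_eq_of_nonempty_of_le ?_
    (hne.mono (subset_affineSpan K F)) hle
  have hdir := AffineSubspace.direction_le hle
  rw [Submodule.toAffineSubspace_direction] at hdir ⊢
  refine Submodule.eq_of_le_of_finrank_le hdir ?_
  have := Submodule.finrank_lt hker
  omega

theorem Fin.eq_of_monotone_of_map_univ_eq {α : Type*} [PartialOrder α] {m : ℕ}
    {f g : Fin m → α} (hf : Monotone f) (hg : Monotone g)
    (h : Finset.univ.val.map f = Finset.univ.val.map g) : f = g := by
  rw [Fin.univ_val_map, Fin.univ_val_map, Multiset.coe_eq_coe] at h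
  exact List.ofFn_injective (h.eq_of_pairwise' hf.sortedLE_ofFn.pairwise hg.sortedLE_ofFn.pairwise)

namespace Matrix.IsHermitian

open Polynomial

variable {m : ℕ} {M : Matrix (Fin m) (Fin m) ℂ}

theorem charpoly_neg (hM : M.IsHermitian) :
    (-M).charpoly = ∏ i, (X - C ((-hM.eigenvalues i : ℝ) : ℂ)) := by
  conv_lhs => rw [hM.spectral_theorem, Unitary.conjStarAlgAut_apply, ← Matrix.neg_mul,
    ← Matrix.mul_neg, charpoly_mul_comm, ← mul_assoc]
  simp [charpoly_diagonal]

theorem map_eigenvalues_neg (hM : M.IsHermitian) :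
    Finset.univ.val.map hM.neg.eigenvalues = Finset.univ.val.map (fun i => -hM.eigenvalues i) := by
  have hroots := hM.neg.roots_charpoly_eq_eigenvalues
  rw [hM.charpoly_neg, roots_prod _ _ (Finset.prod_ne_zero_iff.2 fun i _ => X_sub_C_ne_zero _)]
    at hroots
  simp only [roots_X_sub_C, Multiset.bind_singleton] at hroots
  refine Multiset.map_injective Complex.ofReal_injective ?_
  rw [Multiset.map_map, Multiset.map_map]
  exact hroots.symm

theorem sort_eigenvalues_neg (hM : M.IsHermitian) :
    hM.neg.eigenvalues ∘ Tuple.sort hM.neg.eigenvalues =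
      fun i => -(hM.eigenvalues ∘ Tuple.sort hM.eigenvalues) i.rev := by
  have map_comp_perm : ∀ (f : Fin m → ℝ) (σ : Equiv.Perm (Fin m)),
      Finset.univ.val.map (f ∘ σ) = Finset.univ.val.map f := fun f σ => by
    rw [← Multiset.map_map, Multiset.map_univ_val_equiv]
  refine Fin.eq_of_monotone_of_map_univ_eq (Tuple.monotone_sort _)
    (fun i j hij => neg_le_neg (Tuple.monotone_sort _ (Fin.rev_le_rev.2 hij))) ?_
  calc Finset.univ.val.map (hM.neg.eigenvalues ∘ Tuple.sort hM.neg.eigenvalues)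
      _ = Finset.univ.val.map fun i => -hM.eigenvalues i := by
        rw [map_comp_perm, map_eigenvalues_neg]
      _ = Finset.univ.val.map fun i => -(hM.eigenvalues ∘ Tuple.sort hM.eigenvalues) i :=
        (map_comp_perm (fun i => -hM.eigenvalues i) _).symm
      _ = _ := (map_comp_perm _ Fin.revPerm).symm

end Matrix.IsHermitian

section kthEig

variable {m : ℕ} {M : Matrix (Fin m) (Fin m) ℂ}

theorem kthEig_le_kthEig (hM : M.IsHermitian) {j k : ℕ} (hk : 1 ≤ k) (hkj : k ≤ j) (hjm : j ≤ m) :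
    kthEig M j ≤ kthEig M k := by
  rw [kthEig, kthEig, dif_pos hM, dif_pos hM, dif_pos (by omega), dif_pos (by omega)]
  exact Tuple.monotone_sort _ (Fin.mk_le_mk.2 (by omega))

theorem kthEig_neg (hM : M.IsHermitian) {k : ℕ} (hk : 1 ≤ k) (hkm : k ≤ m) :
    kthEig (-M) k = -kthEig M (m + 1 - k) := by
  rw [kthEig, kthEig, dif_pos hM.neg, dif_pos hM, dif_pos (by omega), dif_pos (by omega),
    hM.sort_eigenvalues_neg]
  exact congrArg (fun i => -(hM.eigenvalues ∘ Tuple.sort hM.eigenvalues) i)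
    (Fin.ext (by simp only [Fin.val_rev]; omega))

theorem kthEig_add_kthEig_neg_nonneg (hM : M.IsHermitian) {k : ℕ} (hk : 1 ≤ k)
    (hkm : 2 * k ≤ m + 1) : 0 ≤ kthEig M k + kthEig (-M) k := by
  rw [kthEig_neg hM hk (by omega)]
  linarith [kthEig_le_kthEig hM hk (j := m + 1 - k) (by omega) (by omega)]

end kthEig

theorem isHermitian_ReM {n : ℕ} (A : Matrix (Fin n) (Fin n) ℂ) : (ReM A).IsHermitian :=
  (isHermitian_add_transpose_self A).smul (by simp [IsSelfAdjoint])

theorem isHermitian_ImM {n : ℕ} (A : Matrix (Fin n) (Fin n) ℂ) : (ImM A).IsHermitian := by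
  have hstar : star ((2 * Complex.I)⁻¹) = -(2 * Complex.I)⁻¹ := by
    simp [Complex.conj_I]
  rw [ImM, IsHermitian, conjTranspose_smul, conjTranspose_sub, conjTranspose_conjTranspose, hstar,
    neg_smul, ← smul_neg, neg_sub]

theorem lamTheta_add_lamTheta_add_pi_nonneg {n k : ℕ} (A : Matrix (Fin n) (Fin n) ℂ) (hk : 1 ≤ k)
    (hkn : 2 * k ≤ n + 1) (θ : ℝ) : 0 ≤ lamTheta A k θ + lamTheta A k (θ + Real.pi) := by
  have hM : ((Real.cos θ : ℂ) • ReM A + (Real.sin θ : ℂ) • ImM A).IsHermitian :=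
    ((isHermitian_ReM A).smul (Complex.conj_ofReal _)).add
      ((isHermitian_ImM A).smul (Complex.conj_ofReal _))
  have hneg : ((Real.cos (θ + Real.pi) : ℂ) • ReM A + (Real.sin (θ + Real.pi) : ℂ) • ImM A) =
      -((Real.cos θ : ℂ) • ReM A + (Real.sin θ : ℂ) • ImM A) := by
    simp only [Real.cos_add_pi, Real.sin_add_pi, Complex.ofReal_neg, neg_smul, neg_add]
  rw [lamTheta, lamTheta, lamXY, lamXY, hneg]
  exact kthEig_add_kthEig_neg_nonneg hM hk hkn

def planeFunctional (a b : ℝ) : (Fin 3 → ℝ) →ₗ[ℝ] ℝ :=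
  LinearMap.proj 0 + a • LinearMap.proj 1 + b • LinearMap.proj 2

@[simp]
theorem planeFunctional_apply (a b : ℝ) (v : Fin 3 → ℝ) :
    planeFunctional a b v = v 0 + a * v 1 + b * v 2 := by
  simp [planeFunctional]

@[simp]
theorem planeFunctional_vecCons (a b x y w : ℝ) :
    planeFunctional a b ![x, y, w] = x + a * y + b * w := by
  simp

theorem planeFunctional_ne_zero (a b : ℝ) : planeFunctional a b ≠ 0 := fun h => by
  simpa using LinearMap.congr_fun h (Pi.single 0 1)

section Face

variable {n k : ℕ} {A : Matrix (Fin n) (Fin n) ℂ} {F : Set (Fin 3 → ℝ)} {a b : ℝ}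

theorem le_lamTheta_of_isExtreme (hface : IsExtreme ℝ (convexHull ℝ (OkSet A k)) F)
    (h0 : (0 : Fin 3 → ℝ) ∈ intrinsicInterior ℝ F)
    (hspan : affineSpan ℝ F = (LinearMap.ker (planeFunctional a b)).toAffineSubspace)
    (hsum : ∀ θ, 0 ≤ lamTheta A k θ + lamTheta A k (θ + Real.pi))
    (θ : ℝ) : a * Real.cos θ + b * Real.sin θ ≤ lamTheta A k θ := by
  by_contra! hlt
  let φ := planeFunctional a b
  have hp : φ ![lamTheta A k θ, -Real.cos θ, -Real.sin θ] < 0 := by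
    simp only [φ, planeFunctional_vecCons]
    linarith
  have hq :
      0 < φ ![lamTheta A k (θ + Real.pi), -Real.cos (θ + Real.pi), -Real.sin (θ + Real.pi)] := by
    simp only [φ, planeFunctional_vecCons, Real.cos_add_pi, Real.sin_add_pi]
    linarith [hsum θ]
  obtain ⟨r, hr, hr0⟩ := exists_mem_openSegment_map_eq_zero hp hq
  have hpF := hface.left_mem_of_openSegment_inter_affineSpan (convex_convexHull ℝ _) h0
    (subset_convexHull ℝ _ ⟨θ, rfl⟩) (subset_convexHull ℝ _ ⟨θ + Real.pi, rfl⟩) hr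
    (by rw [hspan]; exact hr0)
  have hp0 : φ ![lamTheta A k θ, -Real.cos θ, -Real.sin θ] = 0 := by
    simpa only [hspan, SetLike.mem_coe, Submodule.mem_toAffineSubspace, LinearMap.mem_ker]
      using subset_affineSpan ℝ F hpF
  linarith

theorem eq_of_mem_numRange_of_isExtreme (hface : IsExtreme ℝ (convexHull ℝ (OkSet A k)) F)
    (h0 : (0 : Fin 3 → ℝ) ∈ intrinsicInterior ℝ F)
    (hspan : affineSpan ℝ F = (LinearMap.ker (planeFunctional a b)).toAffineSubspace)
    {z : ℂ} (hz : z ∈ NumRange A k) :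
    z = a + b * Complex.I := by
  let ψ := planeFunctional z.re z.im
  have hψ : ∀ v ∈ convexHull ℝ (OkSet A k), 0 ≤ ψ v := by
    refine fun v hv => convexHull_min ?_ (convex_halfSpace_ge ψ.isLinear 0) hv
    rintro _ ⟨θ, rfl⟩
    simp only [Set.mem_ofPred_eq, ψ, planeFunctional_vecCons]
    linarith [hz θ]
  have hker : ∀ v, planeFunctional a b v = 0 → ψ v = 0 := fun v hv =>
    ψ.map_eq_zero_of_nonneg_of_mem_intrinsicInterior (fun f hf => hψ f (hface.subset hf)) h0
      (map_zero ψ) (by rw [hspan, Submodule.toAffineSubspace_direction]; exact hv)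
  have hre := hker ![-a, 1, 0] (by simp)
  have him := hker ![-b, 0, 1] (by simp)
  simp only [ψ, planeFunctional_vecCons] at hre him
  apply Complex.ext <;> simp <;> linarith

end Face

theorem stmt10_general {n k : ℕ} (hk1 : 1 ≤ k) (hk2 : (k : ℝ) ≤ (n + 1) / 2)
    (A : Matrix (Fin n) (Fin n) ℂ)
    (F : Set (Fin 3 → ℝ))
    (hface : IsExtreme ℝ (convexHull ℝ (OkSet A k)) F)
    (hdim : Module.finrank ℝ (affineSpan ℝ F).direction = 2)
    (h0 : (0 : Fin 3 → ℝ) ∈ intrinsicInterior ℝ F)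
    (a b : ℝ) (hsub : F ⊆ {v : Fin 3 → ℝ | v 0 + a * v 1 + b * v 2 = 0}) :
    NumRange A k = {(a : ℂ) + b * Complex.I} := by
  have hkn : 2 * k ≤ n + 1 := by
    have : (2 * k : ℝ) ≤ n + 1 := by linarith
    exact_mod_cast this
  have hspan : affineSpan ℝ F = (LinearMap.ker (planeFunctional a b)).toAffineSubspace :=
    affineSpan_eq_ker_of_finrank_succ (planeFunctional_ne_zero a b)
      ⟨0, intrinsicInterior_subset h0⟩ (fun v hv => by simpa using hsub hv) (by simp [hdim])
  ext z
  refine ⟨eq_of_mem_numRange_of_isExtreme hface h0 hspan, ?_⟩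
  rintro rfl θ
  simpa using le_lamTheta_of_isExtreme hface h0 hspan
    (lamTheta_add_lamTheta_add_pi_nonneg A hk1 hkn) θ

/-- Suppose `k ≤ (n+1)/2` and `O_k(A)` is not contained in a plane
through the origin. If `F` is a two-dimensional face of `conv(O_k(A))` whose relative
interior contains `(0,0,0)` and `F ⊆ {t + ax + by = 0}`, then `Λ_k(A) = {a + ib}`. -/
theorem stmt10 {n k : ℕ} (hk1 : 1 ≤ k) (hkn : k ≤ n) (hk2 : (k : ℝ) ≤ (n + 1) / 2)
    (A : Matrix (Fin n) (Fin n) ℂ)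
    (hplane : ¬ ∃ w : Fin 3 → ℝ, w ≠ 0 ∧
      ∀ θ : ℝ, w 0 * lamTheta A k θ - w 1 * Real.cos θ - w 2 * Real.sin θ = 0)
    (F : Set (Fin 3 → ℝ)) (hFconv : Convex ℝ F)
    (hface : IsExtreme ℝ (convexHull ℝ (OkSet A k)) F)
    (hdim : Module.finrank ℝ (affineSpan ℝ F).direction = 2)
    (h0 : (0 : Fin 3 → ℝ) ∈ intrinsicInterior ℝ F)
    (a b : ℝ) (hsub : F ⊆ {v : Fin 3 → ℝ | v 0 + a * v 1 + b * v 2 = 0}) :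
    NumRange A k = {(a : ℂ) + b * Complex.I} :=
  stmt10_general hk1 hk2 A F hface hdim h0 a b hsub
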